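/- arXiv:1511.06594 — 6 statements merged into one kernel-verified Lean document; each statement's English description precedes it below -/
import Mathlib

section
/- Derivative of the basis: for every natural number n ≥ 1, real parameters α, β with 0 ≤ α ≤ β, every k with 0 ≤ k ≤ n, and every real t, the derivative of the Bernstein function with shifted knots satisfies (d/dt) G_{n,α,β}^k(t) = (n+β) · (H_{k−1}(t) − H_k(t)), with the convention that H_{−1}(t) = 0 and H_n(t) = 0. -/
/-- Bernstein functions with shifted knots of degree `n`:
`G_{n,α,β}^k(t) = C(n,k) ((n+β)/n)^n (t - α/(n+β))^k ((n+α)/(n+β) - t)^(n-k)`. -/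
noncomputable def G (n : ℕ) (α β : ℝ) (k : ℕ) (t : ℝ) : ℝ :=
  (n.choose k : ℝ) * ((n + β) / n) ^ n * (t - α / (n + β)) ^ k *
    ((n + α) / (n + β) - t) ^ (n - k)

/-- Degree-(n-1) Bernstein functions on the same shifted interval:
`H_j(t) = C(n-1,j) ((n+β)/n)^(n-1) (t - α/(n+β))^j ((n+α)/(n+β) - t)^(n-1-j)`. -/
noncomputable def H (n : ℕ) (α β : ℝ) (j : ℕ) (t : ℝ) : ℝ :=
  ((n - 1).choose j : ℝ) * ((n + β) / n) ^ (n - 1) * (t - α / (n + β)) ^ j *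
    ((n + α) / (n + β) - t) ^ (n - 1 - j)

/-- Derivative of the shifted-knot Bernstein basis, with the conventions
`H_{-1} = 0` and `H_n = 0`. -/
theorem G_deriv (n : ℕ) (hn : 1 ≤ n) (α β : ℝ) (hα : 0 ≤ α) (hαβ : α ≤ β)
    (k : ℕ) (hk : k ≤ n) (t : ℝ) :
    deriv (fun s => G n α β k s) t
      = ((n : ℝ) + β) * ((if k = 0 then 0 else H n α β (k - 1) t)
          - (if k = n then 0 else H n α β k t)) := by
  obtain ⟨m, rfl⟩ : ∃ m, n = m + 1 := ⟨n - 1, by omega⟩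
  have hn1 : (1:ℝ) ≤ ((m+1:ℕ):ℝ) := by exact_mod_cast hn
  set a := α / (((m+1:ℕ):ℝ) + β) with ha
  set b := (((m+1:ℕ):ℝ) + α) / (((m+1:ℕ):ℝ) + β) with hb
  set c := (((m+1:ℕ):ℝ) + β) / ((m+1:ℕ):ℝ) with hc
  have hx : HasDerivAt (fun s : ℝ => (s - a)^k) ((k:ℝ) * (t - a)^(k-1) * 1) t :=
    ((hasDerivAt_id t).sub_const a).pow k
  have hy : HasDerivAt (fun s : ℝ => (b - s)^(m+1-k))
      ((((m+1-k:ℕ)):ℝ) * (b - t)^(m+1-k-1) * (0-1)) t :=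
    ((hasDerivAt_const t b).sub (hasDerivAt_id t)).pow (m+1-k)
  have hG : HasDerivAt (fun s => G (m+1) α β k s)
      (((m+1).choose k : ℝ) * c ^ (m+1) *
        (((k:ℝ) * (t - a)^(k-1) * 1) * (b - t)^(m+1-k)
          + (t - a)^k * ((((m+1-k:ℕ)):ℝ) * (b - t)^(m+1-k-1) * (0-1)))) t := by
    have := (hx.mul hy).const_mul (((m+1).choose k : ℝ) * c ^ (m+1))
    simpa [G, mul_assoc, ha, hb, hc] using this
  rw [hG.deriv]
  have hcmul : ((m+1:ℕ):ℝ) * c = ((m+1:ℕ):ℝ) + β := by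
    rw [hc]; field_simp
  rcases Nat.eq_zero_or_pos k with rfl | hk0
  · have hkn : ¬ ((0:ℕ) = m + 1) := by omega
    simp only [if_pos rfl, if_neg hkn, H, ← ha, ← hb, ← hc, ite_true]
    simp only [Nat.choose_zero_right, Nat.cast_one, Nat.cast_zero, Nat.add_sub_cancel,
      Nat.sub_zero, pow_zero, Nat.sub_self, Nat.cast_ofNat]
    rw [pow_succ]
    linear_combination (-(c^m * (b-t)^m)) * hcmul
  · obtain ⟨j, rfl⟩ : ∃ j, k = j + 1 := ⟨k - 1, by omega⟩
    have hj : j ≤ m := by omega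
    have hne0 : ¬ (j + 1 = 0) := by omega
    rcases eq_or_lt_of_le hj with rfl | hjm
    · -- k = n case
      simp only [if_neg hne0, if_pos rfl, H, ← ha, ← hb, ← hc, ite_true]
      simp only [Nat.add_sub_cancel, Nat.sub_self, Nat.choose_self, Nat.cast_one,
        Nat.cast_zero, pow_zero, Nat.zero_sub, Nat.sub_zero]
      rw [pow_succ]
      linear_combination ((t-a)^j * c^j) * hcmul
    · -- 0 < k < n case
      have hneq : ¬ (j + 1 = m + 1) := by omega
      obtain ⟨p, hp⟩ : ∃ p, m - j = p + 1 := ⟨m - j - 1, by omega⟩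
      simp only [if_neg hne0, if_neg hneq, H, ← ha, ← hb, ← hc, Nat.add_sub_cancel]
      rw [show m + 1 - (j + 1) - 1 = p from by omega,
        show m + 1 - (j + 1) = p + 1 from by omega,
        show m - (j + 1) = p from by omega,
        show m - j = p + 1 from hp]
      have hA : (((m+1).choose (j+1) : ℕ) : ℝ) * ((j:ℝ)+1)
          = (((m+1:ℕ)):ℝ) * ((m.choose j : ℕ) : ℝ) := by
        exact_mod_cast congrArg (Nat.cast (R := ℝ))
          (Nat.add_one_mul_choose_eq m j).symm
      have hB : (((m+1).choose (j+1) : ℕ) : ℝ) * ((p:ℝ)+1)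
          = (((m+1:ℕ)):ℝ) * ((m.choose (j+1) : ℕ) : ℝ) := by
        have h2 := Nat.choose_mul_succ_eq m (j+1)
        rw [show m + 1 - (j + 1) = p + 1 from by omega] at h2
        have h3 : (m+1).choose (j+1) * (p+1) = (m+1) * m.choose (j+1) := by
          rw [← h2]; ring
        exact_mod_cast congrArg (Nat.cast (R := ℝ)) h3
      push_cast
      push_cast at hA hB hcmul
      linear_combination (c^(m+1) * (t-a)^j * (b-t)^(p+1)) * hA
        + ((m.choose j : ℝ) * c^m * (t-a)^j * (b-t)^(p+1)) * hcmul
        - (c^(m+1) * (t-a)^(j+1) * (b-t)^p) * hB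
        - ((m.choose (j+1) : ℝ) * c^m * (t-a)^(j+1) * (b-t)^p) * hcmul
end

section
/- Derivative of a Bézier curve with shifted knots: for every natural number n ≥ 1, real parameters α, β with 0 ≤ α ≤ β, control points P_0, …, P_n in ℝ^d (or any real normed vector space), and every real t, the curve P(t) = ∑_{k=0}^{n} P_k · G_{n,α,β}^k(t) is differentiable and P′(t) = (n+β) · ∑_{k=0}^{n−1} (P_{k+1} − P_k) · H_k(t). -/
/-! `G^k` and `H_j` are the constants `((n+β)/n)^n` and `((n+β)/n)^(n-1)` times the homogeneous
Bernstein polynomials `C(n,k) (t-a)^k (b-t)^(n-k)` with `a = α/(n+β)`, `b = (n+α)/(n+β)`.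
Differentiating these lowers the degree exactly as for ordinary Bernstein polynomials, and an
index shift turns the derivative of the curve into a combination of the differences
`P (k+1) - P k`; the constants combine as `n * ((n+β)/n) = n+β`. -/

/-- `(b - a) ^ n` times the `k`-th Bernstein basis polynomial of degree `n` on `[a, b]`. -/
noncomputable def bernsteinOn (a b : ℝ) (n k : ℕ) (s : ℝ) : ℝ :=
  n.choose k * (s - a) ^ k * (b - s) ^ (n - k)

section bernsteinOn

variable (a b : ℝ)

lemma hasDerivAt_bernsteinOn_succ_zero (n : ℕ) (t : ℝ) :
    HasDerivAt (bernsteinOn a b (n + 1) 0) (-(n + 1) * bernsteinOn a b n 0 t) t := by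
  have h : HasDerivAt (fun s => (b - s) ^ (n + 1)) ((n + 1 : ℕ) * (b - t) ^ n * -1) t :=
    ((hasDerivAt_id t).const_sub b).fun_pow (n + 1)
  convert h using 1
  · ext s; simp [bernsteinOn]
  · simp only [bernsteinOn, Nat.choose_zero_right, Nat.sub_zero]; push_cast; ring

lemma hasDerivAt_bernsteinOn_succ_succ (n k : ℕ) (t : ℝ) :
    HasDerivAt (bernsteinOn a b (n + 1) (k + 1))
      ((n + 1) * (bernsteinOn a b n k t - bernsteinOn a b n (k + 1) t)) t := by
  have hleft : ((n + 1).choose (k + 1) : ℝ) * (k + 1 : ℕ) = (n + 1) * n.choose k := by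
    exact_mod_cast (Nat.add_one_mul_choose_eq n k).symm
  have hright : ((n + 1).choose (k + 1) : ℝ) * (n - k : ℕ) = (n + 1) * n.choose (k + 1) := by
    have := Nat.choose_mul_succ_eq n (k + 1)
    rw [Nat.add_sub_add_right] at this
    exact_mod_cast this.symm.trans (mul_comm _ _)
  have h : HasDerivAt (fun s => (n + 1).choose (k + 1) * ((s - a) ^ (k + 1) * (b - s) ^ (n - k)))
      ((n + 1).choose (k + 1) * ((k + 1 : ℕ) * (t - a) ^ k * 1 * (b - t) ^ (n - k) +
        (t - a) ^ (k + 1) * ((n - k : ℕ) * (b - t) ^ (n - (k + 1)) * -1))) t := by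
    rw [← Nat.sub_sub]
    exact ((((hasDerivAt_id t).sub_const a).fun_pow (k + 1)).fun_mul
      (((hasDerivAt_id t).const_sub b).fun_pow (n - k))).const_mul _
  convert h using 1
  · ext s; simp only [bernsteinOn, Nat.add_sub_add_right]; ring
  · simp only [bernsteinOn]
    linear_combination (t - a) ^ (k + 1) * (b - t) ^ (n - (k + 1)) * hright -
      (t - a) ^ k * (b - t) ^ (n - k) * hleft

lemma bernsteinOn_of_lt {n k : ℕ} (h : n < k) (s : ℝ) : bernsteinOn a b n k s = 0 := by
  simp [bernsteinOn, Nat.choose_eq_zero_of_lt h]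

theorem hasDerivAt_sum_bernsteinOn_smul {E : Type*} [NormedAddCommGroup E] [NormedSpace ℝ E]
    (n : ℕ) (P : ℕ → E) (t : ℝ) :
    HasDerivAt (fun s => ∑ k ∈ Finset.range (n + 1 + 1), bernsteinOn a b (n + 1) k s • P k)
      (((n : ℝ) + 1) • ∑ k ∈ Finset.range (n + 1), bernsteinOn a b n k t • (P (k + 1) - P k)) t := by
  have hshift : ∑ k ∈ Finset.range (n + 1), bernsteinOn a b n k t • P k =
      ∑ k ∈ Finset.range (n + 1), bernsteinOn a b n (k + 1) t • P (k + 1) +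
        bernsteinOn a b n 0 t • P 0 := by
    rw [← Finset.sum_range_succ' (fun k => bernsteinOn a b n k t • P k),
      Finset.sum_range_succ _ (n + 1),
      bernsteinOn_of_lt a b n.lt_succ_self, zero_smul, add_zero]
  have h := (HasDerivAt.fun_sum (u := Finset.range (n + 1)) fun k _ =>
      (hasDerivAt_bernsteinOn_succ_succ a b n k t).smul_const (P (k + 1))).add
    ((hasDerivAt_bernsteinOn_succ_zero a b n t).smul_const (P 0))
  simp only [Finset.sum_range_succ' _ (n + 1)]
  refine h.congr_deriv (Eq.symm ?_)
  calc _ = ((n : ℝ) + 1) • (∑ k ∈ Finset.range (n + 1), bernsteinOn a b n k t • P (k + 1) -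
        ∑ k ∈ Finset.range (n + 1), bernsteinOn a b n k t • P k) := by
        simp only [smul_sub, Finset.sum_sub_distrib]
    _ = _ := by
        rw [hshift]
        simp only [mul_smul, sub_smul, smul_sub, Finset.smul_sum, Finset.sum_sub_distrib, neg_mul,
          neg_smul, smul_add]
        abel

end bernsteinOn

lemma G_eq_mul_bernsteinOn (n : ℕ) (α β : ℝ) (k : ℕ) (t : ℝ) :
    G n α β k t = ((n + β) / n) ^ n * bernsteinOn (α / (n + β)) ((n + α) / (n + β)) n k t := by
  simp only [G, bernsteinOn]; ring

lemma H_eq_mul_bernsteinOn (n : ℕ) (α β : ℝ) (j : ℕ) (t : ℝ) :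
    H n α β j t =
      ((n + β) / n) ^ (n - 1) * bernsteinOn (α / (n + β)) ((n + α) / (n + β)) (n - 1) j t := by
  simp only [H, bernsteinOn]; ring

theorem bezier_deriv_general (n : ℕ) (hn : 1 ≤ n) (α β : ℝ)
    {E : Type*} [NormedAddCommGroup E] [NormedSpace ℝ E] (P : ℕ → E) (t : ℝ) :
    HasDerivAt (fun s => ∑ k ∈ Finset.range (n + 1), G n α β k s • P k)
      (((n : ℝ) + β) • ∑ k ∈ Finset.range n, H n α β k t • (P (k + 1) - P k)) t := by
  obtain ⟨m, rfl⟩ : ∃ m, n = m + 1 := ⟨n - 1, by omega⟩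
  simp only [G_eq_mul_bernsteinOn, H_eq_mul_bernsteinOn, Nat.add_sub_cancel, mul_smul,
    ← Finset.smul_sum]
  set c : ℝ := ((m + 1 : ℕ) + β) / (m + 1 : ℕ)
  have hc : c * (m + 1 : ℕ) = (m + 1 : ℕ) + β := div_mul_cancel₀ _ (by positivity)
  convert (hasDerivAt_sum_bernsteinOn_smul _ _ m P t).fun_const_smul (c ^ (m + 1)) using 1
  rw [smul_smul, smul_smul]
  congr 1
  clear_value c
  push_cast at hc ⊢
  linear_combination -c ^ m * hc

/-- Derivative of a Bézier curve with shifted knots. -/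
theorem bezier_deriv (n : ℕ) (hn : 1 ≤ n) (α β : ℝ) (hα : 0 ≤ α) (hαβ : α ≤ β)
    {E : Type*} [NormedAddCommGroup E] [NormedSpace ℝ E] (P : ℕ → E) (t : ℝ) :
    HasDerivAt (fun s => ∑ k ∈ Finset.range (n + 1), G n α β k s • P k)
      (((n : ℝ) + β) • ∑ k ∈ Finset.range n, H n α β k t • (P (k + 1) - P k)) t :=
  bezier_deriv_general n hn α β P t
end

section
/- End-point property of the derivative at the left end-point: for every natural number n ≥ 1, real parameters α, β with 0 ≤ α ≤ β, and control points P_0, …, P_n in ℝ^d (or any real normed vector space), the Bézier curve P(t) = ∑_{k=0}^{n} P_k · G_{n,α,β}^k(t) satisfies P′(α/(n+β)) = (n+β) · (P_1 − P_0); in particular the curve is tangent to the first edge of its control polygon at the left end-point. -/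
open Finset

theorem hasDerivAt_sub_pow_mul_pow (k m : ℕ) (a b : ℝ) :
    HasDerivAt (fun t => (t - a) ^ k * (b - t) ^ m)
      (k * 0 ^ (k - 1) * (b - a) ^ m - 0 ^ k * (m * (b - a) ^ (m - 1))) a := by
  have hleft := ((hasDerivAt_id' a).sub_const a).fun_pow k
  have hright := ((hasDerivAt_id' a).const_sub b).fun_pow m
  refine (hleft.fun_mul hright).congr_deriv ?_
  simp only [sub_self]
  ring

theorem hasDerivAt_bezier_left {E : Type*} [NormedAddCommGroup E] [NormedSpace ℝ E] {n : ℕ}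
    (hn : 1 ≤ n) (c a b : ℝ) (P : ℕ → E) :
    HasDerivAt
      (fun t => ∑ k ∈ range (n + 1),
        ((n.choose k : ℝ) * c * (t - a) ^ k * (b - t) ^ (n - k)) • P k)
      ((c * n * (b - a) ^ (n - 1)) • (P 1 - P 0)) a := by
  have hterm : ∀ k ∈ range (n + 1), HasDerivAt
      (fun t => ((n.choose k : ℝ) * c * (t - a) ^ k * (b - t) ^ (n - k)) • P k)
      (((n.choose k : ℝ) * c * (k * 0 ^ (k - 1) * (b - a) ^ (n - k)
        - 0 ^ k * ((n - k : ℕ) * (b - a) ^ (n - k - 1)))) • P k) a := fun k _ => by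
    simpa only [mul_assoc] using
      ((hasDerivAt_sub_pow_mul_pow k (n - k) a b).const_mul ((n.choose k : ℝ) * c)).smul_const
        (P k)
  refine (HasDerivAt.fun_sum hterm).congr_deriv ?_
  rw [sum_eq_add_of_mem 0 1 (by simp) (mem_range.2 (by omega)) zero_ne_one]
  · simp only [Nat.choose_zero_right, Nat.choose_one_right, Nat.cast_one, CharP.cast_eq_zero,
      zero_tsub, tsub_zero, tsub_self, pow_zero, pow_one, one_mul, mul_one, zero_mul, zero_sub,
      mul_neg, neg_smul]
    module
  · rintro (_ | _ | k) - ⟨h0, h1⟩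
    · contradiction
    · contradiction
    · simp

theorem div_pow_mul_mul_div_pow_pred {n : ℕ} (hn : 1 ≤ n) (x : ℝ) :
    (x / n) ^ n * n * (n / x) ^ (n - 1) = x := by
  obtain ⟨m, rfl⟩ := Nat.exists_eq_add_of_le' hn
  rw [add_tsub_cancel_right]
  rcases eq_or_ne x 0 with rfl | hx
  · simp
  · rw [div_pow, div_pow]
    field_simp
    ring

theorem bezier_deriv_left_general (n : ℕ) (hn : 1 ≤ n) (α β : ℝ)
    {E : Type*} [NormedAddCommGroup E] [NormedSpace ℝ E] (P : ℕ → E) :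
    HasDerivAt (fun s => ∑ k ∈ Finset.range (n + 1), G n α β k s • P k)
      (((n : ℝ) + β) • (P 1 - P 0)) (α / (n + β)) := by
  have hwidth : (n + α) / (n + β) - α / (n + β) = n / (n + β) := by
    rw [div_sub_div_same, add_sub_cancel_right]
  refine (hasDerivAt_bezier_left hn (((n + β) / n) ^ n) (α / (n + β)) ((n + α) / (n + β)) P
    |>.congr_deriv ?_)
  rw [hwidth, div_pow_mul_mul_div_pow_pred hn]

/-- End-point property of the derivative at the left end-point: the Bézier curve
with shifted knots is tangent to the first edge of its control polygon. -/
theorem bezier_deriv_left (n : ℕ) (hn : 1 ≤ n) (α β : ℝ) (hα : 0 ≤ α) (hαβ : α ≤ β)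
    {E : Type*} [NormedAddCommGroup E] [NormedSpace ℝ E] (P : ℕ → E) :
    HasDerivAt (fun s => ∑ k ∈ Finset.range (n + 1), G n α β k s • P k)
      (((n : ℝ) + β) • (P 1 - P 0)) (α / (n + β)) :=
  bezier_deriv_left_general n hn α β P
end

section
/- Convex hull property of the Bézier curve: for every natural number n ≥ 1, real parameters α, β with 0 ≤ α ≤ β, control points P_0, …, P_n in ℝ^d (or any real vector space), and every t in the interval [α/(n+β), (n+α)/(n+β)], the point P(t) = ∑_{k=0}^{n} P_k · G_{n,α,β}^k(t) lies in the convex hull of the set {P_0, P_1, …, P_n}. -/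
/-- Convex hull property of the Bézier curve with shifted knots. -/
theorem bezier_convex_hull (n : ℕ) (hn : 1 ≤ n) (α β : ℝ) (hα : 0 ≤ α) (hαβ : α ≤ β)
    {E : Type*} [AddCommGroup E] [Module ℝ E] (P : ℕ → E) (t : ℝ)
    (ht : t ∈ Set.Icc (α / (n + β)) ((n + α) / (n + β))) :
    (∑ k ∈ Finset.range (n + 1), G n α β k t • P k)
      ∈ convexHull ℝ (P '' {k | k ≤ n}) := by
  obtain ⟨ht1, ht2⟩ := ht
  have hn' : (0:ℝ) < n := by exact_mod_cast hn
  have hnβ : (0:ℝ) < n + β := by linarith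
  have hx : 0 ≤ t - α / (n + β) := by linarith
  have hy : 0 ≤ (n + α) / (n + β) - t := by linarith
  have hc : (0:ℝ) ≤ ((n + β) / n) ^ n := by positivity
  have hw : ∀ k ∈ Finset.range (n + 1), 0 ≤ G n α β k t := by
    intro k _
    unfold G
    have : (0:ℝ) ≤ (n.choose k : ℝ) := by positivity
    positivity
  have hsum : ∑ k ∈ Finset.range (n + 1), G n α β k t = 1 := by
    have hxy : (t - α / (n + β)) + ((n + α) / (n + β) - t) = n / (n + β) := by
      field_simp
      ring
    have hbin := add_pow (t - α / (n + β)) ((n + α) / (n + β) - t) n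
    rw [hxy] at hbin
    have : ∑ k ∈ Finset.range (n + 1), G n α β k t
        = ((n + β) / n) ^ n * ∑ k ∈ Finset.range (n + 1),
            (t - α / (n + β)) ^ k * ((n + α) / (n + β) - t) ^ (n - k) * (n.choose k : ℝ) := by
      rw [Finset.mul_sum]
      refine Finset.sum_congr rfl fun k _ => ?_
      unfold G; ring
    rw [this, ← hbin, ← mul_pow]
    rw [div_mul_div_comm, mul_comm ((n:ℝ) + β) (n:ℝ), div_self (by positivity), one_pow]
  have := Finset.centerMass_mem_convexHull (Finset.range (n + 1))
    hw (by rw [hsum]; norm_num)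
    (fun k hk => Set.mem_image_of_mem P (by
      simpa [Set.mem_setOf_eq, Nat.lt_succ_iff] using Finset.mem_range.mp hk))
    (z := P) (s := P '' {k | k ≤ n})
  rwa [Finset.centerMass_eq_of_sum_1 _ _ hsum] at this
end

section
/- Degree elevation of a Bézier curve with shifted knots: for every natural number n ≥ 1, real parameters α, β with 0 ≤ α ≤ β, control points P_0, …, P_n in ℝ^d (or any real vector space), and every real t, one has ∑_{k=0}^{n} P_k · G_{n,α,β}^k(t) = ∑_{k=0}^{n+1} P*_k · G̃_{n+1,α,β}^k(t), where P*_0 = P_0, P*_{n+1} = P_n, and P*_k = (k/(n+1)) · P_{k−1} + ((n+1−k)/(n+1)) · P_k for 1 ≤ k ≤ n. -/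
/-- Degree-(n+1) Bernstein functions on the same shifted interval:
`G̃_{n+1,α,β}^k(t) = C(n+1,k) ((n+β)/n)^(n+1) (t - α/(n+β))^k ((n+α)/(n+β) - t)^(n+1-k)`. -/
noncomputable def Gt (n : ℕ) (α β : ℝ) (k : ℕ) (t : ℝ) : ℝ :=
  ((n + 1).choose k : ℝ) * ((n + β) / n) ^ (n + 1) * (t - α / (n + β)) ^ k *
    ((n + α) / (n + β) - t) ^ (n + 1 - k)

open Finset

def homBernstein {R : Type*} [CommSemiring R] (n k : ℕ) (x y : R) : R :=
  n.choose k * x ^ k * y ^ (n - k)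

section Elevation

variable {K : Type*} [Field K] [CharZero K]

theorem add_mul_homBernstein {n k : ℕ} (hk : k ≤ n) (x y : K) :
    (x + y) * homBernstein n k x y =
      ((k + 1) / (n + 1)) * homBernstein (n + 1) (k + 1) x y
        + ((n + 1 - k) / (n + 1)) * homBernstein (n + 1) k x y := by
  have hchoose_succ : ((n + 1).choose (k + 1) : K) * (k + 1) = (n + 1) * n.choose k := by
    exact_mod_cast (Nat.add_one_mul_choose_eq n k).symm
  have hchoose : ((n + 1).choose k : K) * (n + 1 - k) = (n + 1) * n.choose k := by
    have h := congrArg (Nat.cast (R := K)) (Nat.choose_mul_succ_eq n k)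
    push_cast [Nat.cast_sub (show k ≤ n + 1 by omega)] at h
    linear_combination -h
  unfold homBernstein
  rw [show n + 1 - (k + 1) = n - k by omega, show n + 1 - k = n - k + 1 by omega,
    div_mul_eq_mul_div, div_mul_eq_mul_div, ← add_div, eq_div_iff n.cast_add_one_ne_zero]
  linear_combination -(x ^ (k + 1) * y ^ (n - k)) * hchoose_succ
    - (x ^ k * y ^ (n - k + 1)) * hchoose

variable {E : Type*} [AddCommGroup E] [Module K E]

theorem sum_add_mul_homBernstein_smul (n : ℕ) (x y : K) (P Q : ℕ → E)
    (hQ0 : Q 0 = P 0) (hQtop : Q (n + 1) = P n)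
    (hQ : ∀ k, 1 ≤ k → k ≤ n →
      Q k = ((k : K) / (n + 1)) • P (k - 1) + (((n : K) + 1 - k) / (n + 1)) • P k) :
    ∑ k ∈ range (n + 1), ((x + y) * homBernstein n k x y) • P k
      = ∑ k ∈ range (n + 2), homBernstein (n + 1) k x y • Q k := by
  have hn : (n : K) + 1 ≠ 0 := n.cast_add_one_ne_zero
  have hQ_all : ∀ k ∈ range (n + 2),
      Q k = ((k : K) / (n + 1)) • P (k - 1) + (((n : K) + 1 - k) / (n + 1)) • P k := by
    intro k hk
    rcases Nat.eq_zero_or_pos k with rfl | hk0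
    · simp [hQ0, div_self hn]
    rcases (Nat.lt_succ_iff.mp (mem_range.mp hk)).eq_or_lt with rfl | hkn
    · simp [hQtop, div_self hn]
    · exact hQ k hk0 (by omega)
  calc ∑ k ∈ range (n + 1), ((x + y) * homBernstein n k x y) • P k
      = ∑ k ∈ range (n + 1), (((k : K) + 1) / (n + 1) * homBernstein (n + 1) (k + 1) x y) • P k
        + ∑ k ∈ range (n + 1), (((n : K) + 1 - k) / (n + 1) * homBernstein (n + 1) k x y) • P k := by
        rw [← sum_add_distrib]
        refine sum_congr rfl fun k hk => ?_
        rw [add_mul_homBernstein (Nat.lt_succ_iff.mp (mem_range.mp hk)), add_smul]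
    _ = ∑ k ∈ range (n + 2), ((k : K) / (n + 1) * homBernstein (n + 1) k x y) • P (k - 1)
        + ∑ k ∈ range (n + 2), (((n : K) + 1 - k) / (n + 1) * homBernstein (n + 1) k x y) • P k := by
        rw [sum_range_succ' _ (n + 1), sum_range_succ _ (n + 1)]
        simp
    _ = ∑ k ∈ range (n + 2), homBernstein (n + 1) k x y • Q k := by
        rw [← sum_add_distrib]
        refine sum_congr rfl fun k hk => ?_
        rw [hQ_all k hk, smul_add, mul_smul, mul_smul, smul_comm _ (homBernstein _ _ _ _),
          smul_comm ((n + 1 - k : K) / (n + 1)) (homBernstein _ _ _ _)]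

end Elevation

theorem pow_mul_mul_inv_self {G₀ : Type*} [GroupWithZero G₀] {n : ℕ} (hn : n ≠ 0) (u : G₀) :
    u ^ n * (u * u⁻¹) = u ^ n := by
  rcases eq_or_ne u 0 with rfl | hu
  · simp [hn]
  · rw [mul_inv_cancel₀ hu, mul_one]

theorem bezier_degree_elevation_general (n : ℕ) (hn : 1 ≤ n) (α β : ℝ)
    {E : Type*} [AddCommGroup E] [Module ℝ E] (P Q : ℕ → E)
    (hQ0 : Q 0 = P 0) (hQtop : Q (n + 1) = P n)
    (hQ : ∀ k, 1 ≤ k → k ≤ n →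
      Q k = ((k : ℝ) / (n + 1)) • P (k - 1) + (((n : ℝ) + 1 - k) / (n + 1)) • P k)
    (t : ℝ) :
    ∑ k ∈ Finset.range (n + 1), G n α β k t • P k
      = ∑ k ∈ Finset.range (n + 2), Gt n α β k t • Q k := by
  set c : ℝ := (n + β) / n
  set x : ℝ := t - α / (n + β)
  set y : ℝ := (n + α) / (n + β) - t
  have hG : ∀ k, G n α β k t = c ^ n * homBernstein n k x y := fun k => by
    unfold G homBernstein; ring
  have hGt : ∀ k, Gt n α β k t = c ^ (n + 1) * homBernstein (n + 1) k x y := fun k => by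
    unfold Gt homBernstein; ring
  have hxy : x + y = c⁻¹ := by
    rw [inv_div]; simp only [x, y]; ring
  have hc : c ^ (n + 1) * (x + y) = c ^ n := by
    rw [hxy, pow_succ, mul_assoc, pow_mul_mul_inv_self (by omega)]
  calc ∑ k ∈ range (n + 1), G n α β k t • P k
      = ∑ k ∈ range (n + 1), (c ^ (n + 1) * ((x + y) * homBernstein n k x y)) • P k := by
        refine sum_congr rfl fun k _ => ?_
        rw [hG, ← hc, mul_assoc]
    _ = c ^ (n + 1) • ∑ k ∈ range (n + 1), ((x + y) * homBernstein n k x y) • P k := by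
        simp only [mul_smul, smul_sum]
    _ = c ^ (n + 1) • ∑ k ∈ range (n + 2), homBernstein (n + 1) k x y • Q k := by
        rw [sum_add_mul_homBernstein_smul n x y P Q hQ0 hQtop hQ]
    _ = ∑ k ∈ range (n + 2), Gt n α β k t • Q k := by
        simp only [hGt, mul_smul, smul_sum]

/-- Degree elevation of a Bézier curve with shifted knots. -/
theorem bezier_degree_elevation (n : ℕ) (hn : 1 ≤ n) (α β : ℝ) (hα : 0 ≤ α) (hαβ : α ≤ β)
    {E : Type*} [AddCommGroup E] [Module ℝ E] (P Q : ℕ → E)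
    (hQ0 : Q 0 = P 0) (hQtop : Q (n + 1) = P n)
    (hQ : ∀ k, 1 ≤ k → k ≤ n →
      Q k = ((k : ℝ) / (n + 1)) • P (k - 1) + (((n : ℝ) + 1 - k) / (n + 1)) • P k)
    (t : ℝ) :
    ∑ k ∈ Finset.range (n + 1), G n α β k t • P k
      = ∑ k ∈ Finset.range (n + 2), Gt n α β k t • Q k :=
  bezier_degree_elevation_general n hn α β P Q hQ0 hQtop hQ t
end

section
/- de Casteljau algorithm: for every natural number n ≥ 1, real parameters α, β with 0 ≤ α ≤ β, control points P_0, …, P_n in ℝ^d (or any real vector space), and every real t, define recursively P_i^0(t) = P_i for i = 0, …, n, and P_i^r(t) = ((n+β)/n)·(t − α/(n+β)) · P_{i+1}^{r−1}(t) + ((n+β)/n)·((n+α)/(n+β) − t) · P_i^{r−1}(t) for r = 1, …, n and i = 0, …, n−r. Then P_0^n(t) = ∑_{k=0}^{n} P_k · G_{n,α,β}^k(t), i.e., the algorithm evaluates the Bézier curve with shifted knots. -/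
/-- de Casteljau algorithm: the recursively defined points evaluate the Bézier
curve with shifted knots. -/
theorem de_casteljau (n : ℕ) (hn : 1 ≤ n) (α β : ℝ) (hα : 0 ≤ α) (hαβ : α ≤ β)
    {E : Type*} [AddCommGroup E] [Module ℝ E] (P : ℕ → E) (t : ℝ)
    (D : ℕ → ℕ → E)
    (h0 : ∀ i, i ≤ n → D 0 i = P i)
    (hrec : ∀ r, 1 ≤ r → r ≤ n → ∀ i, i ≤ n - r →
      D r i = (((n : ℝ) + β) / n * (t - α / (n + β))) • D (r - 1) (i + 1)
        + (((n : ℝ) + β) / n * ((n + α) / (n + β) - t)) • D (r - 1) i) :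
    D n 0 = ∑ k ∈ Finset.range (n + 1), G n α β k t • P k := by
  set u : ℝ := ((n : ℝ) + β) / n * (t - α / (n + β)) with hu
  set v : ℝ := ((n : ℝ) + β) / n * ((n + α) / (n + β) - t) with hv
  set c : ℕ → ℕ → ℝ := fun r k => (r.choose k : ℝ) * u ^ k * v ^ (r - k) with hc
  have key : ∀ r, r ≤ n → ∀ i, i ≤ n - r →
      D r i = ∑ k ∈ Finset.range (r + 1), c r k • P (i + k) := by
    intro r
    induction r with
    | zero =>
      intro _ i hi
      simp [hc, h0 i (by omega)]
    | succ r ih =>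
      intro hr i hi
      have hrn : r ≤ n := by omega
      have h1 : D (r + 1) i = u • D r (i + 1) + v • D r i := by
        have := hrec (r + 1) (by omega) hr i hi
        simpa using this
      have hi1 : i + 1 ≤ n - r := by omega
      have hi2 : i ≤ n - r := by omega
      rw [h1, ih hrn (i + 1) hi1, ih hrn i hi2, Finset.smul_sum, Finset.smul_sum]
      have hsplit : ∑ k ∈ Finset.range (r + 2), c (r + 1) k • P (i + k)
          = (∑ k ∈ Finset.range (r + 1), c (r + 1) (k + 1) • P (i + (k + 1)))
            + c (r + 1) 0 • P (i + 0) := by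
        rw [Finset.sum_range_succ' (fun k => c (r + 1) k • P (i + k)) (r + 1)]
      rw [hsplit]
      have hcsucc : ∀ k, k ∈ Finset.range (r + 1) →
          c (r + 1) (k + 1) • P (i + (k + 1))
          = (u * c r k) • P (i + 1 + k) + (v * c r (k + 1)) • P (i + (k + 1)) := by
        intro k hk
        rw [Finset.mem_range] at hk
        have hcoef : c (r + 1) (k + 1) = u * c r k + v * c r (k + 1) := by
          simp only [hc]
          rw [Nat.choose_succ_succ r k]
          push_cast
          by_cases hk' : k = r
          · subst hk'
            simp [Nat.choose_succ_self]
            ring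
          · have e2 : r - k = (r - (k + 1)) + 1 := by omega
            rw [e2]
            ring
        have e3 : i + 1 + k = i + (k + 1) := by omega
        rw [hcoef, add_smul, e3]
      rw [Finset.sum_congr rfl hcsucc, Finset.sum_add_distrib]
      have hA : ∑ k ∈ Finset.range (r + 1), (u * c r k) • P (i + 1 + k)
          = ∑ k ∈ Finset.range (r + 1), u • c r k • P (i + 1 + k) :=
        Finset.sum_congr rfl fun k _ => by rw [mul_smul]
      have hB : (∑ k ∈ Finset.range (r + 1), (v * c r (k + 1)) • P (i + (k + 1)))
            + c (r + 1) 0 • P (i + 0)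
          = ∑ k ∈ Finset.range (r + 1), v • c r k • P (i + k) := by
        have hc0 : c (r + 1) 0 • P (i + 0) = v • c r 0 • P (i + 0) := by
          rw [← mul_smul]
          congr 1
          simp only [hc, Nat.choose_zero_right, Nat.cast_one, one_mul, pow_zero,
            Nat.sub_zero]
          ring
        rw [Finset.sum_range_succ (fun k => (v * c r (k + 1)) • P (i + (k + 1))) r,
          Finset.sum_range_succ' (fun k => v • c r k • P (i + k)) r]
        have hlast : (v * c r (r + 1)) • P (i + (r + 1)) = (0 : E) := by
          simp [hc, Nat.choose_succ_self]
        rw [hlast, add_zero, hc0]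
        congr 1
        refine Finset.sum_congr rfl fun k _ => ?_
        rw [mul_smul]
      rw [add_assoc, hA, hB]
  have hfin := key n le_rfl 0 (by omega)
  rw [hfin]
  refine Finset.sum_congr rfl fun k hk => ?_
  rw [Finset.mem_range] at hk
  have hkn : k ≤ n := by omega
  rw [zero_add]
  congr 1
  simp only [G, hc, hu, hv]
  rw [mul_pow, mul_pow]
  have hp : (((n : ℝ) + β) / n) ^ k * (((n : ℝ) + β) / n) ^ (n - k)
      = (((n : ℝ) + β) / n) ^ n := by
    rw [← pow_add]
    congr 1
    omega
  rw [← hp]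
  ring
end
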